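/- Let G be a simple graph, let M be a matching of G, and let P be an M-augmenting path. Then the symmetric difference of M with the edge set of P is a matching of G whose support is V(M) ∪ V(P); in particular, its support strictly contains V(M). -/

import Mathlib

/-! Along an augmenting path starting at an unmatched vertex, alternation forces the edge
`s(f i, f (i + 1))` to lie in `M` exactly when `i` is odd. So the path edges outside `M` are
pairwise disjoint, they cover every vertex of the path (the last vertex, being unmatched, is
reached by an even edge), and every edge of `M` meeting the path is a path edge. Swapping the
path edges in `M` for those outside `M` thus gives a matching covering `V(M) ∪ V(P)`, and the
start vertex is covered anew. -/

namespace PaperMatchings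

variable {V : Type*}

/-- The support of a set of edges: all vertices incident to some edge in `M`. -/
def supp (M : Set (Sym2 V)) : Set V := {v | ∃ e ∈ M, v ∈ e}

/-- `M` is a matching of `G`: a set of edges of `G` such that no vertex is
incident to more than one edge of `M`. -/
def IsMatching (G : SimpleGraph V) (M : Set (Sym2 V)) : Prop :=
  M ⊆ G.edgeSet ∧ ∀ (v : V), ∀ e ∈ M, ∀ e' ∈ M, v ∈ e → v ∈ e' → e = e'

/-- A perfect matching: a matching whose support is all of `V`. -/
def IsPerfectMatching (G : SimpleGraph V) (M : Set (Sym2 V)) : Prop :=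
  IsMatching G M ∧ supp M = Set.univ

/-- A (finite or infinite) path in `G`, given by its number of vertices `n : ℕ∞`
(`⊤` meaning infinite) and the enumeration `f` of its vertices: it is injective on
indices below `n` and consecutive vertices are adjacent. -/
def IsPath (G : SimpleGraph V) (n : ℕ∞) (f : ℕ → V) : Prop :=
  1 ≤ n ∧
  (∀ i j : ℕ, (i : ℕ∞) < n → (j : ℕ∞) < n → f i = f j → i = j) ∧
  (∀ i : ℕ, ((i : ℕ∞) + 1) < n → G.Adj (f i) (f (i + 1)))

/-- The consecutive edges of the path lie alternately in `M` and outside `M`. -/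
def IsAlternating (M : Set (Sym2 V)) (n : ℕ∞) (f : ℕ → V) : Prop :=
  ∀ i : ℕ, ((i : ℕ∞) + 2) < n →
    (s(f i, f (i + 1)) ∈ M ↔ s(f (i + 1), f (i + 2)) ∉ M)

/-- An `M`-augmenting path starting at `s`: an `M`-alternating path (with at least one
edge) starting at the unmatched vertex `s`, which is either infinite or ends at an
unmatched vertex. -/
def IsAugmentingPath (G : SimpleGraph V) (M : Set (Sym2 V)) (n : ℕ∞) (f : ℕ → V)
    (s : V) : Prop :=
  IsPath G n f ∧ IsAlternating M n f ∧ 1 < n ∧ f 0 = s ∧ s ∉ supp M ∧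
  ∀ k : ℕ, n = (k : ℕ∞) + 1 → f k ∉ supp M

/-- The path contains at least one edge of `M`. -/
def IsProper (M : Set (Sym2 V)) (n : ℕ∞) (f : ℕ → V) : Prop :=
  ∃ i : ℕ, ((i : ℕ∞) + 1) < n ∧ s(f i, f (i + 1)) ∈ M

/-- Condition (A): for every matching `M` and every vertex `s` not in the support
of `M` there is an `M`-augmenting path starting at `s`. -/
def ConditionA (G : SimpleGraph V) : Prop :=
  ∀ M : Set (Sym2 V), IsMatching G M → ∀ s : V, s ∉ supp M →
    ∃ (n : ℕ∞) (f : ℕ → V), IsAugmentingPath G M n f s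

/-- An independent matching: a matching admitting no proper augmenting path. -/
def IndepMatching (G : SimpleGraph V) (M : Set (Sym2 V)) : Prop :=
  IsMatching G M ∧
    ¬ ∃ (s : V) (n : ℕ∞) (f : ℕ → V), IsAugmentingPath G M n f s ∧ IsProper M n f

/-- The induced subgraph of `G` on the vertex set `S` (vertices outside `S`
become isolated). -/
def restrict (G : SimpleGraph V) (S : Set V) : SimpleGraph V where
  Adj u v := G.Adj u v ∧ u ∈ S ∧ v ∈ S
  symm := by
    constructor
    intro u v h
    exact ⟨h.1.symm, h.2.2, h.2.1⟩
  loopless := by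
    constructor
    intro v h
    exact h.1.ne rfl

/-- `W` is an independent subgraph of `G`: the induced subgraph `G[W]` has a perfect
matching (i.e. `G` has a matching with support exactly `W`) and every such matching
is an independent matching of `G`. -/
def IndepSubgraph (G : SimpleGraph V) (W : Set V) : Prop :=
  (∃ M, IsMatching G M ∧ supp M = W) ∧
  ∀ M, IsMatching G M → supp M = W → IndepMatching G M

/-- The induced subgraph `G[W]` satisfies condition (A): for every matching of
`G[W]` and every vertex of `W` not in its support, there is an augmenting path
inside `G[W]`. -/
def ConditionAOn (G : SimpleGraph V) (W : Set V) : Prop :=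
  ∀ M : Set (Sym2 V), IsMatching (restrict G W) M → ∀ s ∈ W, s ∉ supp M →
    ∃ (n : ℕ∞) (f : ℕ → V), IsAugmentingPath (restrict G W) M n f s

section

variable {G : SimpleGraph V} {M E : Set (Sym2 V)} {n : ℕ∞} {f : ℕ → V}

def pathEdges (n : ℕ∞) (f : ℕ → V) : Set (Sym2 V) :=
  {e | ∃ i : ℕ, ((i : ℕ∞) + 1) < n ∧ e = s(f i, f (i + 1))}

def pathVerts (n : ℕ∞) (f : ℕ → V) : Set V := {v | ∃ i : ℕ, (i : ℕ∞) < n ∧ v = f i}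

theorem supp_mono {M M' : Set (Sym2 V)} (h : M ⊆ M') : supp M ⊆ supp M' :=
  fun _ ⟨e, he, hv⟩ => ⟨e, h he, hv⟩

theorem supp_union (M M' : Set (Sym2 V)) : supp (M ∪ M') = supp M ∪ supp M' := by
  ext v
  simp only [supp, Set.mem_union, Set.mem_ofPred_eq, or_and_right, exists_or]

theorem IsMatching.symmDiff (hM : IsMatching G M) (hEM : IsMatching G (E \ M))
    (hcov : ∀ v ∈ supp (E \ M), ∀ e ∈ M, v ∈ e → e ∈ E) :
    IsMatching G (symmDiff M E) := by
  refine ⟨fun e he => he.elim (fun h => hM.1 h.1) (fun h => hEM.1 h), ?_⟩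
  have key : ∀ v, ∀ e ∈ M \ E, ∀ e' ∈ E \ M, v ∈ e → v ∈ e' → False :=
    fun v e he e' he' hv hv' => he.2 (hcov v ⟨e', he', hv'⟩ e he.1 hv)
  rintro v e (he | he) e' (he' | he') hv hv'
  · exact hM.2 v e he.1 e' he'.1 hv hv'
  · exact (key v e he e' he' hv hv').elim
  · exact (key v e' he' e he hv' hv).elim
  · exact hEM.2 v e he e' he' hv hv'

theorem supp_symmDiff_of_supp_subset (h : supp E ⊆ supp (E \ M)) :
    supp (symmDiff M E) = supp M ∪ supp E := by
  have hEM : supp (E \ M) ⊆ supp (symmDiff M E) := supp_mono Set.subset_union_right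
  refine subset_antisymm ?_ (Set.union_subset ?_ (h.trans hEM))
  · rw [Set.symmDiff_def, supp_union]
    exact Set.union_subset_union (supp_mono Set.sdiff_subset) (supp_mono Set.sdiff_subset)
  · rintro v ⟨e, he, hv⟩
    by_cases heE : e ∈ E
    · exact hEM (h ⟨e, heE, hv⟩)
    · exact ⟨e, Or.inl ⟨he, heE⟩, hv⟩

theorem IsAlternating.mem_iff_odd (halt : IsAlternating M n f) (h0 : f 0 ∉ supp M) :
    ∀ i : ℕ, (i : ℕ∞) + 1 < n → (s(f i, f (i + 1)) ∈ M ↔ Odd i)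
  | 0, _ => iff_of_false (fun h => h0 ⟨_, h, Sym2.mem_mk_left _ _⟩) Nat.not_odd_zero
  | i + 1, hi => by
    have hi' : (i : ℕ∞) + 1 < n := lt_of_le_of_lt (by push_cast; exact le_self_add) hi
    have hi2 : (i : ℕ∞) + 2 < n := by convert hi using 1; push_cast; ring
    have := halt i hi2
    rw [Nat.odd_add_one, ← halt.mem_iff_odd h0 i hi']
    tauto

theorem supp_pathEdges_subset : supp (pathEdges n f) ⊆ pathVerts n f := by
  rintro v ⟨_, ⟨i, hi, rfl⟩, hv⟩
  rcases Sym2.mem_iff.1 hv with rfl | rfl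
  · exact ⟨i, lt_of_le_of_lt le_self_add hi, rfl⟩
  · exact ⟨i + 1, by exact_mod_cast hi, rfl⟩

theorem IsPath.eq_or_eq_add_one_of_mem (hPath : IsPath G n f) {i k : ℕ} (hk : (k : ℕ∞) < n)
    (hi : (i : ℕ∞) + 1 < n) (h : f k ∈ s(f i, f (i + 1))) : k = i ∨ k = i + 1 := by
  rcases Sym2.mem_iff.1 h with h | h
  · exact Or.inl (hPath.2.1 k i hk (lt_of_le_of_lt le_self_add hi) h)
  · exact Or.inr (hPath.2.1 k (i + 1) hk (by exact_mod_cast hi) h)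

namespace IsAugmentingPath

variable {s : V} (hP : IsAugmentingPath G M n f s)
include hP

theorem apply_zero_not_mem_supp : f 0 ∉ supp M :=
  hP.2.2.2.1 ▸ hP.2.2.2.2.1

theorem mem_iff_odd : ∀ i : ℕ, (i : ℕ∞) + 1 < n → (s(f i, f (i + 1)) ∈ M ↔ Odd i) :=
  hP.2.1.mem_iff_odd hP.apply_zero_not_mem_supp

theorem not_mem_supp_of_last {i : ℕ} (hi : (i : ℕ∞) < n) (hlast : ¬ (i : ℕ∞) + 1 < n) :
    f i ∉ supp M :=
  hP.2.2.2.2.2 i (le_antisymm (not_lt.1 hlast) (Order.add_one_le_of_lt hi))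

theorem pathVerts_subset_supp_diff : pathVerts n f ⊆ supp (pathEdges n f \ M) := by
  rintro _ ⟨i, hi, rfl⟩
  rcases Nat.even_or_odd i with heven | ⟨j, rfl⟩
  · by_cases hi1 : (i : ℕ∞) + 1 < n
    · refine ⟨_, ⟨⟨i, hi1, rfl⟩, fun h => ?_⟩, Sym2.mem_mk_left _ _⟩
      exact Nat.not_odd_iff_even.2 heven ((hP.mem_iff_odd i hi1).1 h)
    -- an even last vertex would be covered by the preceding edge, which lies in `M`
    · obtain ⟨j, rfl⟩ : ∃ j, i = j + 1 := by
        refine Nat.exists_eq_add_one.2 (Nat.pos_of_ne_zero ?_)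
        rintro rfl
        exact hi1 (by simpa using hP.2.2.1)
      have hj : (j : ℕ∞) + 1 < n := by exact_mod_cast hi
      have hjM := (hP.mem_iff_odd j hj).2 (by simpa [Nat.even_add_one] using heven)
      exact (hP.not_mem_supp_of_last hi hi1 ⟨_, hjM, Sym2.mem_mk_right _ _⟩).elim
  · have hj : ((2 * j : ℕ) : ℕ∞) + 1 < n := by exact_mod_cast hi
    refine ⟨_, ⟨⟨2 * j, hj, rfl⟩, fun h => ?_⟩, Sym2.mem_mk_right _ _⟩
    exact Nat.not_odd_iff_even.2 (even_two_mul j) ((hP.mem_iff_odd _ hj).1 h)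

theorem mem_pathEdges_of_mem (hM : IsMatching G M) {e : Sym2 V} (he : e ∈ M) {i : ℕ}
    (hi : (i : ℕ∞) < n) (hv : f i ∈ e) : e ∈ pathEdges n f := by
  suffices ∃ j : ℕ, (j : ℕ∞) + 1 < n ∧ s(f j, f (j + 1)) ∈ M ∧ f i ∈ s(f j, f (j + 1)) by
    obtain ⟨j, hj, hjM, hij⟩ := this
    exact ⟨j, hj, hM.2 _ e he _ hjM hv hij⟩
  rcases i with _ | i
  · exact (hP.apply_zero_not_mem_supp ⟨e, he, hv⟩).elim
  rcases Nat.even_or_odd i with heven | hodd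
  · by_cases hi1 : ((i + 1 : ℕ) : ℕ∞) + 1 < n
    · exact ⟨i + 1, hi1, (hP.mem_iff_odd _ hi1).2 heven.add_one, Sym2.mem_mk_left _ _⟩
    · exact (hP.not_mem_supp_of_last hi hi1 ⟨e, he, hv⟩).elim
  · have hi1 : (i : ℕ∞) + 1 < n := by exact_mod_cast hi
    exact ⟨i, hi1, (hP.mem_iff_odd i hi1).2 hodd, Sym2.mem_mk_right _ _⟩

theorem isMatching_pathEdges_diff : IsMatching G (pathEdges n f \ M) := by
  refine ⟨?_, ?_⟩
  · rintro _ ⟨⟨i, hi, rfl⟩, -⟩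
    exact hP.1.2.2 i hi
  · rintro v _ ⟨⟨i, hi, rfl⟩, hiM⟩ _ ⟨⟨j, hj, rfl⟩, hjM⟩ hvi hvj
    have hi_even : Even i := Nat.not_odd_iff_even.1 (mt (hP.mem_iff_odd i hi).2 hiM)
    have hj_even : Even j := Nat.not_odd_iff_even.1 (mt (hP.mem_iff_odd j hj).2 hjM)
    obtain ⟨k, hk, rfl, hki⟩ : ∃ k : ℕ, (k : ℕ∞) < n ∧ v = f k ∧ (k = i ∨ k = i + 1) := by
      rcases Sym2.mem_iff.1 hvi with rfl | rfl
      · exact ⟨i, lt_of_le_of_lt le_self_add hi, rfl, Or.inl rfl⟩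
      · exact ⟨i + 1, by exact_mod_cast hi, rfl, Or.inr rfl⟩
    have hkj := hP.1.eq_or_eq_add_one_of_mem hk hj hvj
    obtain ⟨a, rfl⟩ := hi_even
    obtain ⟨b, rfl⟩ := hj_even
    obtain rfl : a = b := by omega
    rfl

theorem supp_pathEdges : supp (pathEdges n f) = pathVerts n f :=
  supp_pathEdges_subset.antisymm (hP.pathVerts_subset_supp_diff.trans (supp_mono Set.sdiff_subset))

end IsAugmentingPath

end

/-- Augmenting a matching along an augmenting path yields a matching
whose support is `V(M) ∪ V(P)`, which strictly contains `V(M)`. -/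
theorem symmDiff_augmenting_path {V : Type*} (G : SimpleGraph V) (M : Set (Sym2 V))
    (hM : IsMatching G M) (n : ℕ∞) (f : ℕ → V) (s : V)
    (hP : IsAugmentingPath G M n f s) :
    IsMatching G (symmDiff M {e : Sym2 V | ∃ i : ℕ, ((i : ℕ∞) + 1) < n ∧ e = s(f i, f (i + 1))}) ∧
    supp (symmDiff M {e : Sym2 V | ∃ i : ℕ, ((i : ℕ∞) + 1) < n ∧ e = s(f i, f (i + 1))}) =
      supp M ∪ {v : V | ∃ i : ℕ, (i : ℕ∞) < n ∧ v = f i} ∧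
    supp M ⊂ supp (symmDiff M {e : Sym2 V | ∃ i : ℕ, ((i : ℕ∞) + 1) < n ∧ e = s(f i, f (i + 1))}) := by
  change IsMatching G (symmDiff M (pathEdges n f)) ∧
    supp (symmDiff M (pathEdges n f)) = supp M ∪ pathVerts n f ∧
    supp M ⊂ supp (symmDiff M (pathEdges n f))
  have hsupp : supp (symmDiff M (pathEdges n f)) = supp M ∪ pathVerts n f := by
    rw [supp_symmDiff_of_supp_subset (hP.supp_pathEdges ▸ hP.pathVerts_subset_supp_diff),
      hP.supp_pathEdges]
  refine ⟨hM.symmDiff hP.isMatching_pathEdges_diff ?_, hsupp, ?_⟩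
  · rintro v hv e he hve
    obtain ⟨i, hi, rfl⟩ := hP.supp_pathEdges ▸ supp_mono Set.sdiff_subset hv
    exact hP.mem_pathEdges_of_mem hM he hi hve
  · rw [hsupp, Set.ssubset_union_left_iff]
    exact fun h => hP.apply_zero_not_mem_supp (h ⟨0, zero_lt_one.trans hP.2.2.1, rfl⟩)

end PaperMatchings
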